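/- The infinite word w = x₁ (x₂)³ (x₁)⁷ (x₂)¹⁵ ⋯ is not in L_ss, i.e., neither π₁(w) nor π₂(w) has a safe suffix. -/

import Mathlib

/-- The alphabet `I = {0, +, -}`. -/
inductive I : Type
  | zero | plus | minus
deriving DecidableEq, Inhabited

/-- Value of a single letter. -/
def lv : I → ℤ
  | I.zero => 0
  | I.plus => 1
  | I.minus => -1

/-- Energy level of a finite word. -/
def EL (v : List I) : ℤ := (v.map lv).sum

/-- The prefix `w(0) ⋯ w(n-1)` of an infinite word, of length `n`. -/
def prefixWord (w : ℕ → I) (n : ℕ) : List I := (List.range n).map w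

/-- `w` is safe if every nonempty prefix has nonnegative energy level. -/
def Safe (w : ℕ → I) : Prop := ∀ n : ℕ, 0 ≤ EL (prefixWord w (n + 1))

/-- `w` has a safe suffix. -/
def HasSafeSuffix (w : ℕ → I) : Prop := ∃ n : ℕ, Safe (fun k => w (n + k))

/-- The word `x₁ = (+,0)(+,-)`. -/
def x1 : List (I × I) := [(I.plus, I.zero), (I.plus, I.minus)]

/-- The word `x₂ = (0,+)(-,+)`. -/
def x2 : List (I × I) := [(I.zero, I.plus), (I.minus, I.plus)]

/-- The `k`-th building block word: `x₁` if `k` is odd, `x₂` if `k` is even. -/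
def blockWord (k : ℕ) : List (I × I) := if k % 2 = 1 then x1 else x2

/-- The `k`-th block: `2^k - 1` copies of `blockWord k`. -/
def blk (k : ℕ) : List (I × I) := (List.replicate (2 ^ k - 1) (blockWord k)).flatten

/-- Concatenation of blocks `1, …, j`, i.e. `x₁ (x₂)³ (x₁)⁷ ⋯`. -/
def P (j : ℕ) : List (I × I) := ((List.range j).map (fun i => blk (i + 1))).flatten

/-- The infinite word `w_ss̄ = x₁ (x₂)³ (x₁)⁷ (x₂)¹⁵ ⋯`; the `n`-th letter is read off from
a sufficiently long finite prefix of blocks. -/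
def wss (n : ℕ) : I × I := (P (n + 1)).getD n (I.zero, I.zero)

/-!
In `π₁(w)` every copy of `x₁` raises the energy by `2` and every copy of `x₂` lowers it by `1`,
so blocks `2i+1` and `2i+2` together contribute `2(2^(2i+1) - 1) - (2^(2i+2) - 1) = -1`: after the
first `2m` blocks the energy is `-m`. Symmetrically, `π₂(w)` has energy `-(m+1)` after the first
`2m+1` blocks. Hence the prefix energies of both projections are unbounded below, whereas a safe
suffix starting at position `n` bounds every longer prefix energy below by that of the first `n`
letters.
-/

lemma EL_append (a b : List I) : EL (a ++ b) = EL a + EL b := by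
  simp [EL]

lemma EL_flatten_replicate (m : ℕ) (l : List I) :
    EL (List.replicate m l).flatten = m * EL l := by
  simp [EL, List.sum_flatten, List.map_flatten, List.map_replicate, List.sum_replicate]

lemma prefixWord_add (w : ℕ → I) (n t : ℕ) :
    prefixWord w (n + t) = prefixWord w n ++ prefixWord (fun k => w (n + k)) t := by
  simp [prefixWord, List.range_add, Function.comp_def]

lemma EL_prefixWord_le_of_safe {w : ℕ → I} {n : ℕ} (hsafe : Safe (fun k => w (n + k)))
    {m : ℕ} (hm : n < m) : EL (prefixWord w n) ≤ EL (prefixWord w m) := by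
  obtain ⟨t, rfl⟩ : ∃ t, m = n + (t + 1) := ⟨m - n - 1, by omega⟩
  rw [prefixWord_add, EL_append]
  linarith [hsafe t]

lemma not_hasSafeSuffix_of_EL_prefixWord_unbounded {w : ℕ → I}
    (h : ∀ (c : ℤ) (N : ℕ), ∃ m, N ≤ m ∧ EL (prefixWord w m) < c) : ¬ HasSafeSuffix w := by
  rintro ⟨n, hsafe⟩
  obtain ⟨m, hnm, hlt⟩ := h (EL (prefixWord w n)) (n + 1)
  exact hlt.not_ge (EL_prefixWord_le_of_safe hsafe hnm)

lemma P_succ (j : ℕ) : P (j + 1) = P j ++ blk (j + 1) := by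
  simp [P, List.range_succ]

lemma P_prefix_P {i j : ℕ} (h : i ≤ j) : P i <+: P j := by
  induction j, h using Nat.le_induction with
  | base => exact List.prefix_rfl
  | succ j _ ih => exact ih.trans ⟨blk (j + 1), (P_succ j).symm⟩

lemma length_blk (k : ℕ) : (blk k).length = (2 ^ k - 1) * 2 := by
  have hbw : (blockWord k).length = 2 := by unfold blockWord; split <;> rfl
  simp [blk, List.length_flatten, List.map_replicate, List.sum_replicate, hbw]

lemma le_length_P (j : ℕ) : j ≤ (P j).length := by
  induction j with
  | zero => simp
  | succ j ih =>
    have : 2 ≤ 2 ^ (j + 1) := Nat.le_self_pow (by omega) 2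
    rw [P_succ, List.length_append, length_blk]
    omega

lemma wss_eq_getElem {j n : ℕ} (h : n < (P j).length) : wss n = (P j)[n] := by
  have hn : n < (P (n + 1)).length := Nat.lt_of_succ_le (le_length_P (n + 1))
  rw [wss, List.getD_eq_getElem _ _ hn]
  rcases le_total (n + 1) j with hj | hj
  · exact (P_prefix_P hj).getElem hn
  · exact ((P_prefix_P hj).getElem h).symm

lemma prefixWord_wss_length_P (f : I × I → I) (j : ℕ) :
    prefixWord (fun n => f (wss n)) (P j).length = (P j).map f := by
  refine List.ext_getElem (by simp [prefixWord]) fun n h _ => ?_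
  have hn : n < (P j).length := by simpa [prefixWord] using h
  simp [prefixWord, wss_eq_getElem hn]

lemma EL_map_blk (f : I × I → I) (k : ℕ) :
    EL ((blk k).map f) = (2 ^ k - 1 : ℤ) * EL ((blockWord k).map f) := by
  have : ((2 ^ k - 1 : ℕ) : ℤ) = 2 ^ k - 1 := by
    rw [Nat.cast_sub Nat.one_le_two_pow]; norm_num
  rw [blk, List.map_flatten, List.map_replicate, EL_flatten_replicate, this]

lemma blockWord_two_mul_add_one (m : ℕ) : blockWord (2 * m + 1) = x1 :=
  if_pos (by omega)

lemma blockWord_two_mul_add_two (m : ℕ) : blockWord (2 * m + 2) = x2 :=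
  if_neg (by omega)

lemma EL_map_P_add_two (f : I × I → I) (j : ℕ) :
    EL ((P (j + 2)).map f) =
      EL ((P j).map f) + EL ((blk (j + 1)).map f) + EL ((blk (j + 2)).map f) := by
  rw [P_succ, P_succ, List.map_append, List.map_append, EL_append, EL_append]

lemma EL_fst_P_two_mul (m : ℕ) : EL ((P (2 * m)).map Prod.fst) = -m := by
  induction m with
  | zero => simp [P, EL]
  | succ m ih =>
    rw [mul_add, mul_one, EL_map_P_add_two, ih, EL_map_blk, EL_map_blk,
      blockWord_two_mul_add_one, blockWord_two_mul_add_two]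
    simp only [x1, x2, EL, lv, List.map_cons, List.map_nil, List.sum_cons, List.sum_nil]
    push_cast
    ring

lemma EL_snd_P_two_mul_add_one (m : ℕ) : EL ((P (2 * m + 1)).map Prod.snd) = -(m + 1) := by
  induction m with
  | zero => simp [P, blk, blockWord, x1, EL, lv]
  | succ m ih =>
    rw [show 2 * (m + 1) + 1 = 2 * m + 1 + 2 by ring, EL_map_P_add_two, ih, EL_map_blk,
      EL_map_blk, show 2 * m + 1 + 1 = 2 * m + 2 by ring,
      show 2 * m + 1 + 2 = 2 * (m + 1) + 1 by ring,
      blockWord_two_mul_add_one, blockWord_two_mul_add_two]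
    simp only [x1, x2, EL, lv, List.map_cons, List.map_nil, List.sum_cons, List.sum_nil]
    push_cast
    ring

lemma not_hasSafeSuffix_wss_of_EL_P_le (f : I × I → I) (j : ℕ → ℕ) (hj : ∀ m, m ≤ j m)
    (hEL : ∀ m : ℕ, EL ((P (j m)).map f) ≤ -m) : ¬ HasSafeSuffix (fun n => f (wss n)) := by
  refine not_hasSafeSuffix_of_EL_prefixWord_unbounded fun c N => ?_
  set m := max N (c.natAbs + 1)
  refine ⟨(P (j m)).length, (le_max_left _ _).trans ((hj m).trans (le_length_P _)), ?_⟩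
  have hm : c.natAbs + 1 ≤ m := le_max_right _ _
  rw [prefixWord_wss_length_P]
  linarith [hEL m, show -(m : ℤ) < c by omega]

theorem wss_not_in_Lss :
    ¬ (HasSafeSuffix (fun n => (wss n).1) ∨ HasSafeSuffix (fun n => (wss n).2)) := by
  rintro (h | h)
  · exact not_hasSafeSuffix_wss_of_EL_P_le Prod.fst (2 * ·) (by omega)
      (fun m => (EL_fst_P_two_mul m).le) h
  · exact not_hasSafeSuffix_wss_of_EL_P_le Prod.snd (2 * · + 1) (by omega)
      (fun m => by rw [EL_snd_P_two_mul_add_one]; omega) h
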